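/- (Theorem 2.2, determination by equilibrium-variance matching) Fix real numbers a11, a12, a21, a22, σx, σy, R with a22 ≠ 0, R > 0, ã < 0. Let ε₀ > 0 and let a, σX², ŝ : (0, ε₀) → ℝ be bounded functions with ŝ(ε) ≥ s₀ for some constant s₀ > 0 and a(ε) ≤ a₀ for some constant a₀ < 0, such that as ε → 0⁺: (i) −ŝ(ε)²/R + 2*ã*(1 − ε*â)*ŝ(ε) + σs(ε)² = O(ε²); (ii) σX²(ε) = −2*(a(ε) − ã*(1 − ε*â))*ŝ(ε) + σs(ε)² + O(ε²) (the manifold of Theorem 2.1); and (iii) σX²(ε)/a(ε) = σs(ε)²/(ã*(1 − ε*â)) + O(ε²) (matching of the equilibrium variance). Then a(ε) = ã*(1 − ε*â) + O(ε²) and σX²(ε) = σs(ε)² + O(ε²) as ε → 0⁺. -/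
import Mathlib

/-- `f = O(ε²)` as `ε → 0⁺`, with the bound holding inside `(0, ε₀)`. -/
def IsO2 (ε₀ : ℝ) (f : ℝ → ℝ) : Prop :=
  ∃ C ε₁ : ℝ, 0 < C ∧ 0 < ε₁ ∧ ε₁ ≤ ε₀ ∧ ∀ ε, 0 < ε → ε < ε₁ → |f ε| ≤ C * ε ^ 2

/-- `σs(ε)² := σx²(1 − 2εâ) + ε σy² a12²/a22²`. -/
noncomputable def sigs (a12 a21 a22 σx σy ε : ℝ) : ℝ :=
  σx ^ 2 * (1 - 2 * ε * (a12 * a21 / a22 ^ 2)) + ε * σy ^ 2 * a12 ^ 2 / a22 ^ 2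

lemma isO2_congr {ε₀ ε₂ : ℝ} {f g : ℝ → ℝ} (hε₂ : 0 < ε₂) (hle : ε₂ ≤ ε₀)
    (h : ∀ ε, 0 < ε → ε < ε₂ → f ε = g ε) (H : IsO2 ε₀ f) : IsO2 ε₀ g := by
  obtain ⟨C, e1, hC, he1, he1l, hb⟩ := H
  refine ⟨C, min e1 ε₂, hC, lt_min he1 hε₂, (min_le_right _ _).trans hle, fun ε h1 h2 => ?_⟩
  rw [← h ε h1 (h2.trans_le (min_le_right _ _))]
  exact hb ε h1 (h2.trans_le (min_le_left _ _))

lemma isO2_add {ε₀ : ℝ} {f g : ℝ → ℝ} (hf : IsO2 ε₀ f) (hg : IsO2 ε₀ g) :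
    IsO2 ε₀ (fun ε => f ε + g ε) := by
  obtain ⟨C1, e1, hC1, he1, he1l, hb1⟩ := hf
  obtain ⟨C2, e2, hC2, he2, he2l, hb2⟩ := hg
  refine ⟨C1 + C2, min e1 e2, by positivity, lt_min he1 he2,
    (min_le_left _ _).trans he1l, fun ε h1 h2 => ?_⟩
  calc |f ε + g ε| ≤ |f ε| + |g ε| := abs_add_le _ _
    _ ≤ C1 * ε ^ 2 + C2 * ε ^ 2 :=
        add_le_add (hb1 ε h1 (h2.trans_le (min_le_left _ _)))
          (hb2 ε h1 (h2.trans_le (min_le_right _ _)))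
    _ = (C1 + C2) * ε ^ 2 := by ring

lemma isO2_mul_bdd {ε₀ ε₂ M : ℝ} {f g : ℝ → ℝ} (hε₂ : 0 < ε₂) (hle : ε₂ ≤ ε₀)
    (hM : ∀ ε, 0 < ε → ε < ε₂ → |g ε| ≤ M) (H : IsO2 ε₀ f) :
    IsO2 ε₀ (fun ε => f ε * g ε) := by
  obtain ⟨C, e1, hC, he1, he1l, hb⟩ := H
  refine ⟨C * max M 1, min e1 ε₂, by positivity, lt_min he1 hε₂,
    (min_le_right _ _).trans hle, fun ε h1 h2 => ?_⟩
  calc |f ε * g ε| = |f ε| * |g ε| := abs_mul _ _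
    _ ≤ (C * ε ^ 2) * max M 1 :=
        mul_le_mul (hb ε h1 (h2.trans_le (min_le_left _ _)))
          ((hM ε h1 (h2.trans_le (min_le_right _ _))).trans (le_max_left _ _))
          (abs_nonneg _) (by positivity)
    _ = C * max M 1 * ε ^ 2 := by ring

lemma isO2_of_mul_lb {ε₀ ε₂ m : ℝ} {f h : ℝ → ℝ} (hm : 0 < m) (hε₂ : 0 < ε₂) (hle : ε₂ ≤ ε₀)
    (hlb : ∀ ε, 0 < ε → ε < ε₂ → m ≤ |h ε|) (H : IsO2 ε₀ (fun ε => f ε * h ε)) :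
    IsO2 ε₀ f := by
  obtain ⟨C, e1, hC, he1, he1l, hb⟩ := H
  refine ⟨C / m, min e1 ε₂, by positivity, lt_min he1 hε₂,
    (min_le_right _ _).trans hle, fun ε h1 h2 => ?_⟩
  have hh := hlb ε h1 (h2.trans_le (min_le_right _ _))
  have hb' := hb ε h1 (h2.trans_le (min_le_left _ _))
  rw [abs_mul] at hb'
  have key : |f ε| * m ≤ C * ε ^ 2 :=
    le_trans (mul_le_mul_of_nonneg_left hh (abs_nonneg _)) hb'
  rw [div_mul_eq_mul_div, le_div_iff₀ hm]
  linarith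

set_option maxHeartbeats 1000000 in
/-- Theorem 2.2, determination by equilibrium-variance matching:
the manifold of Theorem 2.1 together with the matching of the equilibrium variance
force `a(ε) = ã(1 − εâ) + O(ε²)` and `σX²(ε) = σs(ε)² + O(ε²)`. -/
theorem stmt12 (a11 a12 a21 a22 σx σy R : ℝ) (ha22 : a22 ≠ 0) (hR : 0 < R)
    (hat : a11 - a12 * a21 / a22 < 0)
    (ε₀ : ℝ) (hε₀ : 0 < ε₀) (a sigX2 shat : ℝ → ℝ)
    (hbdd : ∃ M : ℝ, ∀ ε, 0 < ε → ε < ε₀ →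
      |a ε| ≤ M ∧ |sigX2 ε| ≤ M ∧ |shat ε| ≤ M)
    (s₀ : ℝ) (hs₀ : 0 < s₀) (hshat : ∀ ε, 0 < ε → ε < ε₀ → s₀ ≤ shat ε)
    (a₀ : ℝ) (ha₀ : a₀ < 0) (ha : ∀ ε, 0 < ε → ε < ε₀ → a ε ≤ a₀)
    (hres : IsO2 ε₀ (fun ε =>
      -(shat ε) ^ 2 / R
        + 2 * (a11 - a12 * a21 / a22) * (1 - ε * (a12 * a21 / a22 ^ 2)) * shat ε
        + sigs a12 a21 a22 σx σy ε))
    (hman : IsO2 ε₀ (fun ε =>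
      sigX2 ε -
        (-2 * (a ε - (a11 - a12 * a21 / a22) * (1 - ε * (a12 * a21 / a22 ^ 2))) * shat ε
          + sigs a12 a21 a22 σx σy ε)))
    (hvar : IsO2 ε₀ (fun ε =>
      sigX2 ε / a ε -
        sigs a12 a21 a22 σx σy ε
          / ((a11 - a12 * a21 / a22) * (1 - ε * (a12 * a21 / a22 ^ 2))))) :
    IsO2 ε₀ (fun ε =>
        a ε - (a11 - a12 * a21 / a22) * (1 - ε * (a12 * a21 / a22 ^ 2))) ∧
      IsO2 ε₀ (fun ε => sigX2 ε - sigs a12 a21 a22 σx σy ε) := by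
  obtain ⟨M, hM⟩ := hbdd
  set t : ℝ := a11 - a12 * a21 / a22 with ht
  set w : ℝ := a12 * a21 / a22 ^ 2 with hw
  set A : ℝ → ℝ := fun ε => t * (1 - ε * w) with hA
  set σ : ℝ → ℝ := fun ε => sigs a12 a21 a22 σx σy ε with hσ
  -- the small cutoff
  set εc : ℝ := min ε₀ (min 1 (1 / (2 * (|w| + 1)))) with hεc
  have hεcpos : 0 < εc := by
    have : (0:ℝ) < 1 / (2 * (|w| + 1)) := by positivity
    exact lt_min hε₀ (lt_min one_pos this)
  have hεcle : εc ≤ ε₀ := min_le_left _ _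
  set Mb : ℝ := max M 1 with hMb
  have hMb1 : (1:ℝ) ≤ Mb := le_max_right _ _
  -- basic bounds on the domain (0, εc)
  have hAbound : ∀ ε, 0 < ε → ε < εc →
      |A ε| ≤ |t| * (1 + |w|) ∧ |t| / 2 ≤ |A ε| ∧ A ε ≠ 0 := by
    intro ε h1 h2
    have h2a : ε < 1 := h2.trans_le ((min_le_right _ _).trans (min_le_left _ _))
    have h2b : ε < 1 / (2 * (|w| + 1)) :=
      h2.trans_le ((min_le_right _ _).trans (min_le_right _ _))
    have hwpos : (0:ℝ) < 2 * (|w| + 1) := by positivity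
    have h2c : ε * (2 * (|w| + 1)) < 1 := by
      rw [← lt_div_iff₀ hwpos]; exact h2b
    have hwabs : |ε * w| < 1 / 2 := by
      rw [abs_mul, abs_of_pos h1]
      nlinarith [abs_nonneg w]
    have hlohi := abs_lt.mp hwabs
    have hfac1 : (1:ℝ)/2 < 1 - ε * w := by linarith
    have hfac2 : 1 - ε * w < 3/2 := by linarith
    have hεw : ε * |w| ≤ |w| := by nlinarith [abs_nonneg w]
    have hAval : A ε = t * (1 - ε * w) := rfl
    have htneg : t < 0 := hat
    have hAneg : A ε < 0 := by rw [hAval]; nlinarith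
    have habsA : |A ε| = -(t * (1 - ε * w)) := by rw [← hAval, abs_of_neg hAneg]
    have hlow : -(ε * |w|) ≤ ε * w := by
      have := neg_abs_le (ε * w)
      rw [abs_mul, abs_of_pos h1] at this
      exact this
    have key1 := mul_le_mul_of_nonneg_left
      (show 1 - ε * w ≤ 1 + |w| by linarith) (by linarith : (0:ℝ) ≤ -t)
    have key2 := mul_le_mul_of_nonneg_left
      (show (1:ℝ)/2 ≤ 1 - ε * w by linarith) (by linarith : (0:ℝ) ≤ -t)
    refine ⟨?_, ?_, ne_of_lt hAneg⟩
    · rw [habsA, abs_of_neg htneg]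
      nlinarith [key1]
    · rw [habsA, abs_of_neg htneg]
      nlinarith [key2]
  have hane : ∀ ε, 0 < ε → ε < εc → a ε ≠ 0 := fun ε h1 h2 =>
    ne_of_lt (lt_of_le_of_lt (ha ε h1 (h2.trans_le hεcle)) ha₀)
  -- Step 1: multiply hvar by a·A
  have H1 : IsO2 ε₀ (fun ε =>
      (sigX2 ε / a ε - σ ε / A ε) * (a ε * A ε)) := by
    refine isO2_mul_bdd hεcpos hεcle (M := Mb * (|t| * (1 + |w|))) ?_ hvar
    intro ε h1 h2
    have hMε := (hM ε h1 (h2.trans_le hεcle)).1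
    have hAb := (hAbound ε h1 h2).1
    rw [abs_mul]
    have h1' : |a ε| ≤ Mb := hMε.trans (le_max_left _ _)
    exact mul_le_mul h1' hAb (abs_nonneg _) (le_trans (by norm_num) hMb1)
  -- Step 2: rewrite as sigX2·A − σ·a
  have H2 : IsO2 ε₀ (fun ε => sigX2 ε * A ε - σ ε * a ε) := by
    refine isO2_congr hεcpos hεcle ?_ H1
    intro ε h1 h2
    have hA0 := (hAbound ε h1 h2).2.2
    have ha0 := hane ε h1 h2
    field_simp
  -- Step 3: subtract A times the manifold residual
  have H3 : IsO2 ε₀ (fun ε =>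
      (sigX2 ε - (-2 * (a ε - A ε) * shat ε + σ ε)) * (-(A ε))) := by
    refine isO2_mul_bdd hεcpos hεcle (M := |t| * (1 + |w|)) ?_ hman
    intro ε h1 h2
    rw [abs_neg]
    exact (hAbound ε h1 h2).1
  have H4 : IsO2 ε₀ (fun ε => (a ε - A ε) * (-2 * A ε * shat ε - σ ε)) := by
    refine isO2_congr hεcpos hεcle ?_ (isO2_add H2 H3)
    intro ε h1 h2
    ring
  -- Step 4: add (a−A) times hres residual
  have H5 : IsO2 ε₀ (fun ε =>
      (-(shat ε) ^ 2 / R + 2 * t * (1 - ε * w) * shat ε + σ ε) * (a ε - A ε)) := by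
    refine isO2_mul_bdd hεcpos hεcle (M := Mb + |t| * (1 + |w|)) ?_ hres
    intro ε h1 h2
    have hMε := (hM ε h1 (h2.trans_le hεcle)).1
    have hAb := (hAbound ε h1 h2).1
    calc |a ε - A ε| ≤ |a ε| + |A ε| := abs_sub _ _
      _ ≤ Mb + |t| * (1 + |w|) := add_le_add (hMε.trans (le_max_left _ _)) hAb
  have H6 : IsO2 ε₀ (fun ε => (a ε - A ε) * (-(shat ε) ^ 2 / R)) := by
    refine isO2_congr hεcpos hεcle ?_ (isO2_add H4 H5)
    intro ε h1 h2
    show (a ε - A ε) * (-2 * A ε * shat ε - σ ε)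
        + (-(shat ε) ^ 2 / R + 2 * t * (1 - ε * w) * shat ε + σ ε) * (a ε - A ε)
        = (a ε - A ε) * (-(shat ε) ^ 2 / R)
    have : A ε = t * (1 - ε * w) := rfl
    rw [this]; ring
  -- Step 5: divide by the lower-bounded factor
  have HD : IsO2 ε₀ (fun ε => a ε - A ε) := by
    refine isO2_of_mul_lb (m := s₀ ^ 2 / R) (by positivity) hεcpos hεcle ?_ H6
    intro ε h1 h2
    have hs := hshat ε h1 (h2.trans_le hεcle)
    have hnum : |-(shat ε) ^ 2 / R| = shat ε ^ 2 / R := by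
      rw [abs_div, abs_of_pos hR, abs_neg, abs_of_nonneg (sq_nonneg _)]
    rw [hnum]
    have : s₀ ^ 2 ≤ shat ε ^ 2 := by nlinarith
    exact div_le_div_of_nonneg_right this hR.le
  -- Step 6: second conclusion
  have HDs : IsO2 ε₀ (fun ε => (a ε - A ε) * (-2 * shat ε)) := by
    refine isO2_mul_bdd hεcpos hεcle (M := 2 * Mb) ?_ HD
    intro ε h1 h2
    have hMε := (hM ε h1 (h2.trans_le hεcle)).2.2
    rw [abs_mul]
    have : |(-2 : ℝ)| = 2 := by norm_num
    rw [this]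
    have : |shat ε| ≤ Mb := hMε.trans (le_max_left _ _)
    linarith
  have HX : IsO2 ε₀ (fun ε => sigX2 ε - σ ε) := by
    refine isO2_congr hεcpos hεcle ?_ (isO2_add hman HDs)
    intro ε h1 h2
    show sigX2 ε - (-2 * (a ε - A ε) * shat ε + σ ε) + (a ε - A ε) * (-2 * shat ε)
        = sigX2 ε - σ ε
    ring
  exact ⟨HD, HX⟩
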